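/- Commutation of transitions on disjoint components: let W = W1 | W2 be a SWIRL workflow system, and let t1 be a transition executed entirely within W1 (so W → W1' | W2 with W1 → W1') and t2 a transition executed entirely within W2 (so W → W1 | W2' with W2 → W2'). Then executing the residual of the other transition after either one yields the same target: W1' | W2 → W1' | W2' and W1 | W2' → W1' | W2'. -/
import Mathlib


namespace SWIRL

abbrev Loc := ℕ
abbrev Data := ℕ
abbrev Port := ℕ
abbrev StepName := ℕ

/-- Predicates (actions) of SWIRL execution traces:
`exec(s, F(s), M(s))`, `send(d↦p, l, l')`, `recv(p, l, l')`. -/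
inductive Pred : Type where
  | exec (s : StepName) (ins outs : Finset Data) (locs : Finset Loc)
  | send (d : Data) (p : Port) (src dst : Loc)
  | recv (p : Port) (src dst : Loc)
deriving DecidableEq

/-- SWIRL execution traces: the empty trace `0`, single predicates,
sequential composition `e₁.e₂` and parallel composition `e₁ | e₂`. -/
inductive Trace : Type where
  | nil
  | act (μ : Pred)
  | seq (e₁ e₂ : Trace)
  | par (e₁ e₂ : Trace)
deriving DecidableEq

/-- SWIRL workflow systems: location configurations `⟨l, D, e⟩`
and parallel composition `W₁ | W₂`. -/
inductive Sys : Type where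
  | loc (l : Loc) (Dl : Finset Data) (e : Trace)
  | par (W₁ W₂ : Sys)
deriving DecidableEq

/-- Structural congruence on traces, generated by `e|0 ≡ e`, `0.e ≡ e`,
`e.0 ≡ e` and commutativity of `|`. -/
inductive TEq : Trace → Trace → Prop where
  | parNil (e) : TEq (.par e .nil) e
  | seqNilL (e) : TEq (.seq .nil e) e
  | seqNilR (e) : TEq (.seq e .nil) e
  | parComm (e₁ e₂) : TEq (.par e₁ e₂) (.par e₂ e₁)
  | refl (e) : TEq e e
  | symm {e₁ e₂} : TEq e₁ e₂ → TEq e₂ e₁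
  | trans {e₁ e₂ e₃} : TEq e₁ e₂ → TEq e₂ e₃ → TEq e₁ e₃
  | seqCongr {e₁ e₁' e₂ e₂'} : TEq e₁ e₁' → TEq e₂ e₂' → TEq (.seq e₁ e₂) (.seq e₁' e₂')
  | parCongr {e₁ e₁' e₂ e₂'} : TEq e₁ e₁' → TEq e₂ e₂' → TEq (.par e₁ e₂) (.par e₁' e₂')

/-- Structural congruence on workflow systems. -/
inductive SEq : Sys → Sys → Prop where
  | loc (l : Loc) (Dl : Finset Data) {e e'} : TEq e e' → SEq (.loc l Dl e) (.loc l Dl e')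
  | parComm (W₁ W₂) : SEq (.par W₁ W₂) (.par W₂ W₁)
  | refl (W) : SEq W W
  | symm {W₁ W₂} : SEq W₁ W₂ → SEq W₂ W₁
  | trans {W₁ W₂ W₃} : SEq W₁ W₂ → SEq W₂ W₃ → SEq W₁ W₃
  | parCongr {W₁ W₁' W₂ W₂'} : SEq W₁ W₁' → SEq W₂ W₂' → SEq (.par W₁ W₂) (.par W₁' W₂')

/-- Labels: `τ` for communication (send/recv) steps, or an
observable exec action `ν = exec(s, F(s), M(s))`. -/
inductive Lab : Type where
  | tau
  | exec (s : StepName) (ins outs : Finset Data) (locs : Finset Loc)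
deriving DecidableEq

/-- Parallel composition of a nonempty list of systems. -/
def bigPar : Sys → List Sys → Sys
  | W, [] => W
  | W, W' :: Ws => .par W (bigPar W' Ws)

/-- The labelled reduction semantics of SWIRL (rules Exec, L-Comm, Comm,
L-Par, Seq, Par, Congr). -/
inductive Step : Lab → Sys → Sys → Prop where
  | exec (s : StepName) (ins outs : Finset Data) (locs : Finset Loc)
      (c : Loc × Finset Data × Trace) (cs : List (Loc × Finset Data × Trace))
      (hlocs : (↑((c :: cs).map Prod.fst) : Multiset Loc) = locs.val)
      (hin : ∀ x ∈ c :: cs, ins ⊆ x.2.1) :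
      Step (.exec s ins outs locs)
        (bigPar ((fun x => Sys.loc x.1 x.2.1 (.seq (.act (.exec s ins outs locs)) x.2.2)) c)
          (cs.map fun x => Sys.loc x.1 x.2.1 (.seq (.act (.exec s ins outs locs)) x.2.2)))
        (bigPar ((fun x => Sys.loc x.1 (x.2.1 ∪ outs) x.2.2) c)
          (cs.map fun x => Sys.loc x.1 (x.2.1 ∪ outs) x.2.2))
  | lcomm (l : Loc) (Dl : Finset Data) (d : Data) (p : Port) (e e' : Trace) (h : d ∈ Dl) :
      Step .tau
        (.loc l Dl (.par (.seq (.act (.send d p l l)) e) (.seq (.act (.recv p l l)) e')))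
        (.loc l Dl (.par e e'))
  | comm (l l' : Loc) (Dl Dl' : Finset Data) (d : Data) (p : Port) (e e' : Trace) (h : d ∈ Dl) :
      Step .tau
        (.par (.loc l Dl (.seq (.act (.send d p l l')) e))
              (.loc l' Dl' (.seq (.act (.recv p l l')) e')))
        (.par (.loc l Dl e) (.loc l' (insert d Dl') e'))
  | lpar {lab : Lab} {l : Loc} {Dl Dl' : Finset Data} {e₁ e₁' : Trace} (e₂ : Trace) :
      Step lab (.loc l Dl e₁) (.loc l Dl' e₁') →
      Step lab (.loc l Dl (.par e₁ e₂)) (.loc l Dl' (.par e₁' e₂))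
  | seq {lab : Lab} {l : Loc} {Dl Dl' : Finset Data} {e₁ e₁' : Trace} (e₂ : Trace) :
      Step lab (.loc l Dl e₁) (.loc l Dl' e₁') →
      Step lab (.loc l Dl (.seq e₁ e₂)) (.loc l Dl' (.seq e₁' e₂))
  | par {lab : Lab} {W₁ W₁' : Sys} (W₂ : Sys) :
      Step lab W₁ W₁' → Step lab (.par W₁ W₂) (.par W₁' W₂)
  | congr {lab : Lab} {W W₁ W₂ W' : Sys} :
      SEq W W₁ → Step lab W₁ W₂ → SEq W₂ W' → Step lab W W'

/-- Unlabelled reduction `W → W'`. -/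
def Red (W W' : Sys) : Prop := ∃ lab, Step lab W W'

/-- `⇒`: zero or more τ-labelled communication steps. -/
def Taus : Sys → Sys → Prop := Relation.ReflTransGen (Step .tau)

/-- Weak transition matching a label: finitely many (possibly zero) τ-steps,
followed by the matching action when the label is observable. -/
def Match : Lab → Sys → Sys → Prop
  | .tau => Taus
  | .exec s ins outs locs =>
      fun O O' => ∃ O₁, Taus O O₁ ∧ Step (.exec s ins outs locs) O₁ O'

/-- Keys recording the communication predicates already seen by the
optimisation scan (the set `A`). -/
inductive Key : Type where
  | send (p : Port) (src dst : Loc)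
  | recv (p : Port) (src dst : Loc)
deriving DecidableEq

/-- Sequential composition, simplified by the unit laws of structural congruence. -/
def sseq : Trace → Trace → Trace
  | .nil, e => e
  | e, .nil => e
  | e₁, e₂ => .seq e₁ e₂

/-- Parallel composition, simplified by the unit laws of structural congruence. -/
def spar : Trace → Trace → Trace
  | .nil, e => e
  | e, .nil => e
  | e₁, e₂ => .par e₁ e₂

/-- Optimisation of a single predicate: local communications (same source and
target) are replaced by `0`, as well as communications already seen in `A`;
otherwise the predicate is kept and recorded in `A`. -/
def optAct (A : Finset Key) : Pred → Trace × Finset Key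
  | .exec s ins outs locs => (.act (.exec s ins outs locs), A)
  | .send d p l l' =>
      if l = l' then (.nil, A)
      else if Key.send p l l' ∈ A then (.nil, A)
      else (.act (.send d p l l'), insert (Key.send p l l') A)
  | .recv p l l' =>
      if l = l' then (.nil, A)
      else if Key.recv p l l' ∈ A then (.nil, A)
      else (.act (.recv p l l'), insert (Key.recv p l l') A)

/-- Optimisation (the drilling function `⦃·⦄`/`[[·, A]]`) of an execution
trace with accumulator `A`. -/
def optT (A : Finset Key) : Trace → Trace × Finset Key
  | .nil => (.nil, A)
  | .act μ => optAct A μ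
  | .seq e₁ e₂ =>
      let r₁ := optT A e₁
      let r₂ := optT r₁.2 e₂
      (sseq r₁.1 r₂.1, r₂.2)
  | .par e₁ e₂ =>
      let r₁ := optT A e₁
      let r₂ := optT r₁.2 e₂
      (spar r₁.1 r₂.1, r₂.2)

/-- Optimisation of a workflow system with accumulator `A`. -/
def optSys (A : Finset Key) : Sys → Sys
  | .loc l Dl e => .loc l Dl (optT A e).1
  | .par W₁ W₂ => .par (optSys A W₁) (optSys A W₂)

/-- The optimisation function `[[·]]`. -/
def opt (W : Sys) : Sys := optSys ∅ W

/-- Barb `W ↓_ν`: `W` can immediately perform the exec action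
`ν = exec(s, F(s), M(s))`. -/
def Barb (W : Sys) (s : StepName) (ins outs : Finset Data) (locs : Finset Loc) : Prop :=
  ∃ W', Step (.exec s ins outs locs) W W'

/-- Weak barb `W ⇓_ν`: `W ⇒ ↓_ν`. -/
def WeakBarb (W : Sys) (s : StepName) (ins outs : Finset Data) (locs : Finset Loc) : Prop :=
  ∃ W₁, Taus W W₁ ∧ Barb W₁ s ins outs locs

/-- Weak barbed simulation. -/
def IsWeakBarbedSim (R : Sys → Sys → Prop) : Prop :=
  ∀ W O, R W O →
    (∀ s ins outs locs, Barb W s ins outs locs → WeakBarb O s ins outs locs) ∧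
    (∀ W', Red W W' → ∃ O', Taus O O' ∧ R W' O')

/-- Weak barbed bisimulation: both `R` and `R⁻¹` are weak barbed simulations. -/
def IsWeakBarbedBisim (R : Sys → Sys → Prop) : Prop :=
  IsWeakBarbedSim R ∧ IsWeakBarbedSim (fun O W => R W O)

/-- Weak barbed bisimilarity `≈`: the largest weak barbed bisimulation. -/
def Bisimilar (W O : Sys) : Prop := ∃ R, IsWeakBarbedBisim R ∧ R W O

/-- Shape of initial states `W_Init = ∏_j ⟨l_j, ∅, ∏_{s ∈ Q(l_j)} B(s)⟩`:
a parallel composition of location configurations with empty data sets. -/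
inductive InitShape : Sys → Prop where
  | loc (l : Loc) (e : Trace) : InitShape (.loc l ∅ e)
  | par {W₁ W₂} : InitShape W₁ → InitShape W₂ → InitShape (.par W₁ W₂)

/-- Reachability: derivable from an initial state by applying the
reduction and congruence rules. -/
def Reachable (W : Sys) : Prop :=
  ∃ W₀, InitShape W₀ ∧ Relation.ReflTransGen (fun a b => Red a b ∨ SEq a b) W₀ W

/-- **Commutation of transitions on disjoint components**: if `W = W₁ | W₂`,
`t₁` is executed entirely within `W₁` (so `W₁ → W₁'`) and `t₂` entirely within
`W₂` (so `W₂ → W₂'`), then executing the residual of the other transition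
after either one yields the same target:
`W₁' | W₂ → W₁' | W₂'` and `W₁ | W₂' → W₁' | W₂'`. -/
theorem disjoint_components_commute {W₁ W₁' W₂ W₂' : Sys}
    (t₁ : Red W₁ W₁') (t₂ : Red W₂ W₂') :
    Red (.par W₁' W₂) (.par W₁' W₂') ∧ Red (.par W₁ W₂') (.par W₁' W₂') := by
  obtain ⟨lab₁, h₁⟩ := t₁
  obtain ⟨lab₂, h₂⟩ := t₂
  constructor
  · exact ⟨lab₂, .congr (.parComm _ _) (.par _ h₂) (.parComm _ _)⟩
  · exact ⟨lab₁, .par _ h₁⟩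

end SWIRL
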